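/- Expected codimension is invariant under matroid duality with complemented collections: if 𝔖 ⊆ P(E) and 𝔖' = {E∖S : S ∈ 𝔖}, then ec_𝔖(M) = ec_{𝔖'}(M*), and for S ∈ 𝔖, a_𝔖(S) computed in M equals b_{𝔖'}(E∖S) computed in M*. -/

import Mathlib

def RankAxioms {α : Type*} [DecidableEq α] (E : Finset α) (rk : Finset α → ℕ) : Prop :=
  rk ∅ = 0 ∧
  (∀ F ⊆ E, ∀ x ∈ E, rk (insert x F) = rk F ∨ rk (insert x F) = rk F + 1) ∧
  (∀ F ⊆ E, ∀ x ∈ E, ∀ y ∈ E,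
    rk (insert x F) = rk F → rk (insert y F) = rk F → rk (insert x (insert y F)) = rk F)

/-- The Möbius function of the inclusion poset on the collection `𝔖`. -/
def mob {α : Type*} [DecidableEq α] (𝔖 : Finset (Finset α)) (T S : Finset α) : ℤ :=
  if T = S then 1
  else if T ∈ 𝔖 ∧ S ∈ 𝔖 ∧ T ⊆ S then
    - ∑ U ∈ (𝔖.filter fun U => T ⊆ U ∧ U ⊂ S).attach, mob 𝔖 T U.1
  else 0
termination_by S.card
decreasing_by
  exact Finset.card_lt_card (Finset.mem_filter.mp U.2).2.2

/-- `c(S) = #S − rk S` for a (ℤ-valued) rank function. -/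
def cZ {α : Type*} (rkZ : Finset α → ℤ) (S : Finset α) : ℤ :=
  (S.card : ℤ) - rkZ S

/-- `a_𝔖(S) = Σ_{T ∈ 𝔖} c(T) μ_𝔖(T,S)`. -/
def aZ {α : Type*} [DecidableEq α] (𝔖 : Finset (Finset α)) (rkZ : Finset α → ℤ)
    (S : Finset α) : ℤ :=
  ∑ T ∈ 𝔖, cZ rkZ T * mob 𝔖 T S

/-- `b_𝔖(T) = Σ_{S ∈ 𝔖} (k − rk S) μ_𝔖(T,S)`. -/
def bZ {α : Type*} [DecidableEq α] (𝔖 : Finset (Finset α)) (rkZ : Finset α → ℤ)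
    (k : ℤ) (T : Finset α) : ℤ :=
  ∑ S ∈ 𝔖, (k - rkZ S) * mob 𝔖 T S

/-- `ec_𝔖(M) = Σ_{S,T ∈ 𝔖} c(T)(k − rk S) μ_𝔖(T,S)`. -/
def ecZ {α : Type*} [DecidableEq α] (𝔖 : Finset (Finset α)) (rkZ : Finset α → ℤ)
    (k : ℤ) : ℤ :=
  ∑ S ∈ 𝔖, ∑ T ∈ 𝔖, cZ rkZ T * (k - rkZ S) * mob 𝔖 T S


/-!
Complementation `S ↦ E \ S` is an order-reversing bijection from `𝔖` onto `𝔖'`, so the Möbius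
function of `𝔖'` is that of `𝔖` with its arguments swapped. The dual rank function turns
`c*(E \ T)` into `k - rk T` and `(#E - k) - rk*(E \ S)` into `c(S)`, so `b_{𝔖'}(E \ S)` in `M*` is
`a_𝔖(S)` in `M`, and `ec = Σ_S a(S) (k - rk S) = Σ_T c(T) b(T)` is carried from one side to the
other.
-/

open Finset

section Mobius

variable {α : Type*} [DecidableEq α] (𝔖 : Finset (Finset α))

lemma mob_self (S : Finset α) : mob 𝔖 S S = 1 := by
  rw [mob]; simp

variable {𝔖}

lemma mob_of_not_subset {T S : Finset α} (h : ¬T ⊆ S) : mob 𝔖 T S = 0 := by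
  have hne : T ≠ S := by rintro rfl; exact h subset_rfl
  rw [mob]
  simp [hne, h]

lemma mob_eq_neg_sum_ssubset {T S : Finset α} (hT : T ∈ 𝔖) (hS : S ∈ 𝔖) (hne : T ≠ S) :
    mob 𝔖 T S = -∑ U ∈ 𝔖.filter (· ⊂ S), mob 𝔖 T U := by
  by_cases hTS : T ⊆ S
  · rw [mob, if_neg hne, if_pos ⟨hT, hS, hTS⟩, sum_attach, sum_filter, sum_filter]
    congr 1
    refine sum_congr rfl fun U _ => ?_
    by_cases hTU : T ⊆ U <;> simp [hTU, mob_of_not_subset]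
  · rw [mob_of_not_subset hTS, eq_comm, neg_eq_zero]
    exact sum_eq_zero fun U hU =>
      mob_of_not_subset fun hTU => hTS (hTU.trans (mem_filter.1 hU).2.subset)

lemma sum_mob_filter_subset {T S : Finset α} (hT : T ∈ 𝔖) (hS : S ∈ 𝔖) :
    ∑ U ∈ 𝔖.filter (· ⊆ S), mob 𝔖 T U = if T = S then 1 else 0 := by
  have hsplit : 𝔖.filter (· ⊆ S) = insert S (𝔖.filter (· ⊂ S)) := by
    ext U
    simp only [mem_filter, mem_insert]
    constructor
    · rintro ⟨hU, hUS⟩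
      exact (eq_or_ne U S).imp id fun hne => ⟨hU, hUS.ssubset_of_ne hne⟩
    · rintro (rfl | ⟨hU, hUS⟩)
      exacts [⟨hS, subset_rfl⟩, ⟨hU, hUS.subset⟩]
  rw [hsplit, sum_insert fun h => (mem_filter.1 h).2.ne rfl]
  split_ifs with hTS
  · subst hTS
    rw [mob_self, sum_eq_zero fun U hU => mob_of_not_subset (mem_filter.1 hU).2.not_subset,
      add_zero]
  · rw [mob_eq_neg_sum_ssubset hT hS hTS, neg_add_cancel]

end Mobius

section IncidenceMatrices

variable {α : Type*} [DecidableEq α] (𝔖 : Finset (Finset α))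

def zetaMatrix : Matrix 𝔖 𝔖 ℤ := Matrix.of fun U S => if U.1 ⊆ S.1 then 1 else 0

def mobMatrix : Matrix 𝔖 𝔖 ℤ := Matrix.of fun T S => mob 𝔖 T.1 S.1

lemma mobMatrix_mul_zetaMatrix : mobMatrix 𝔖 * zetaMatrix 𝔖 = 1 := by
  ext T S
  simp only [Matrix.mul_apply, mobMatrix, zetaMatrix, Matrix.of_apply, mul_ite, mul_one,
    mul_zero, Matrix.one_apply, ← Subtype.val_inj]
  rw [sum_coe_sort 𝔖 fun U => if U ⊆ S.1 then mob 𝔖 T.1 U else 0, ← sum_filter,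
    sum_mob_filter_subset T.2 S.2]

variable {𝔖}

lemma eq_mobMatrix_of_zetaMatrix_mul_eq_one {N : Matrix 𝔖 𝔖 ℤ} (h : zetaMatrix 𝔖 * N = 1) :
    N = mobMatrix 𝔖 :=
  (left_inv_eq_right_inv (mobMatrix_mul_zetaMatrix 𝔖) h).symm

end IncidenceMatrices

section Complement

variable {α : Type*} [DecidableEq α] {E : Finset α} {𝔖 : Finset (Finset α)}

lemma injOn_sdiff_left (h𝔖 : ∀ S ∈ 𝔖, S ⊆ E) : Set.InjOn (E \ ·) 𝔖 := fun S hS T hT h => by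
  rw [← Finset.sdiff_sdiff_eq_self (h𝔖 S hS), ← Finset.sdiff_sdiff_eq_self (h𝔖 T hT)]
  exact congrArg (E \ ·) h

-- Read backwards, the Möbius function of the complemented collection is a right inverse of
-- `zetaMatrix 𝔖`, hence equals `mobMatrix 𝔖`.
lemma mob_image_sdiff (h𝔖 : ∀ S ∈ 𝔖, S ⊆ E) {T S : Finset α} (hT : T ∈ 𝔖) (hS : S ∈ 𝔖) :
    mob (𝔖.image (E \ ·)) (E \ S) (E \ T) = mob 𝔖 T S := by
  let N : Matrix 𝔖 𝔖 ℤ := Matrix.of fun U V => mob (𝔖.image (E \ ·)) (E \ V.1) (E \ U.1)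
  suffices N = mobMatrix 𝔖 from congrFun (congrFun this ⟨T, hT⟩) ⟨S, hS⟩
  apply eq_mobMatrix_of_zetaMatrix_mul_eq_one
  ext U V
  have hfilter : (𝔖.filter (U.1 ⊆ ·)).image (E \ ·) = (𝔖.image (E \ ·)).filter (· ⊆ E \ U.1) := by
    rw [filter_image]
    congr 1
    exact filter_congr fun W hW => (sdiff_subset_sdiff_iff_subset (h𝔖 W hW) (h𝔖 U.1 U.2)).symm
  simp only [Matrix.mul_apply, zetaMatrix, N, Matrix.of_apply, ite_mul, one_mul, zero_mul,
    Matrix.one_apply]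
  rw [sum_coe_sort 𝔖 fun W => if U.1 ⊆ W then mob (𝔖.image (E \ ·)) (E \ V.1) (E \ W) else 0,
    ← sum_filter, ← sum_image ((injOn_sdiff_left h𝔖).mono (filter_subset _ _)), hfilter,
    sum_mob_filter_subset (mem_image_of_mem _ V.2) (mem_image_of_mem _ U.2)]
  exact if_congr (((injOn_sdiff_left h𝔖).eq_iff V.2 U.2).trans (eq_comm.trans Subtype.val_inj))
    rfl rfl

end Complement

def dualRank {α : Type*} [DecidableEq α] (E : Finset α) (k : ℤ) (rkZ : Finset α → ℤ)
    (S : Finset α) : ℤ :=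
  S.card - k + rkZ (E \ S)

section Duality

variable {α : Type*} [DecidableEq α] {E : Finset α} {𝔖 : Finset (Finset α)} {k : ℤ}
  {rkZ : Finset α → ℤ}

lemma cZ_dualRank_sdiff {T : Finset α} (hT : T ⊆ E) :
    cZ (dualRank E k rkZ) (E \ T) = k - rkZ T := by
  rw [cZ, dualRank, Finset.sdiff_sdiff_eq_self hT]
  ring

lemma sub_dualRank_sdiff {S : Finset α} (hS : S ⊆ E) :
    (E.card - k) - dualRank E k rkZ (E \ S) = cZ rkZ S := by
  rw [dualRank, Finset.sdiff_sdiff_eq_self hS, cast_card_sdiff hS, cZ]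
  ring

lemma bZ_dualRank_image_sdiff (h𝔖 : ∀ S ∈ 𝔖, S ⊆ E) {S : Finset α} (hS : S ∈ 𝔖) :
    bZ (𝔖.image (E \ ·)) (dualRank E k rkZ) (E.card - k) (E \ S) = aZ 𝔖 rkZ S := by
  rw [bZ, aZ, sum_image (injOn_sdiff_left h𝔖)]
  exact sum_congr rfl fun T hT => by
    rw [sub_dualRank_sdiff (h𝔖 T hT), mob_image_sdiff h𝔖 hT hS]

variable (𝔖 rkZ k)

lemma ecZ_eq_sum_aZ_mul : ecZ 𝔖 rkZ k = ∑ S ∈ 𝔖, aZ 𝔖 rkZ S * (k - rkZ S) := by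
  refine sum_congr rfl fun S _ => ?_
  rw [aZ, sum_mul]
  exact sum_congr rfl fun T _ => by ring

lemma ecZ_eq_sum_cZ_mul_bZ : ecZ 𝔖 rkZ k = ∑ T ∈ 𝔖, cZ rkZ T * bZ 𝔖 rkZ k T := by
  rw [ecZ, sum_comm]
  refine sum_congr rfl fun T _ => ?_
  rw [bZ, mul_sum]
  exact sum_congr rfl fun S _ => by ring

variable {𝔖 rkZ k}

lemma ecZ_dualRank_image_sdiff (h𝔖 : ∀ S ∈ 𝔖, S ⊆ E) :
    ecZ (𝔖.image (E \ ·)) (dualRank E k rkZ) (E.card - k) = ecZ 𝔖 rkZ k := by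
  rw [ecZ_eq_sum_cZ_mul_bZ, sum_image (injOn_sdiff_left h𝔖), ecZ_eq_sum_aZ_mul]
  exact sum_congr rfl fun S hS => by
    rw [cZ_dualRank_sdiff (h𝔖 S hS), bZ_dualRank_image_sdiff h𝔖 hS, mul_comm]

end Duality

theorem ec_dual_invariance_general {α : Type*} [DecidableEq α]
    (E : Finset α) (rk : Finset α → ℕ) (k : ℕ)
    (𝔖 : Finset (Finset α)) (h𝔖 : ∀ S ∈ 𝔖, S ⊆ E) :
    ecZ 𝔖 (fun S => (rk S : ℤ)) (k : ℤ)
      = ecZ (𝔖.image fun S => E \ S)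
          (fun S => (S.card : ℤ) - k + rk (E \ S)) ((E.card : ℤ) - k) ∧
    ∀ S ∈ 𝔖,
      aZ 𝔖 (fun S => (rk S : ℤ)) S
        = bZ (𝔖.image fun S => E \ S)
            (fun S => (S.card : ℤ) - k + rk (E \ S)) ((E.card : ℤ) - k) (E \ S) :=
  ⟨(ecZ_dualRank_image_sdiff h𝔖).symm, fun _ hS => (bZ_dualRank_image_sdiff h𝔖 hS).symm⟩

/-- Expected codimension is invariant under matroid duality with complemented
collections: `ec_𝔖(M) = ec_{𝔖'}(M*)` where `𝔖' = {E∖S : S ∈ 𝔖}`, the dual matroid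
`M*` having rank function `S ↦ #S − k + rk (E∖S)` and rank `#E − k`; moreover
`a_𝔖(S)` computed in `M` equals `b_{𝔖'}(E∖S)` computed in `M*`. -/
theorem ec_dual_invariance {α : Type*} [DecidableEq α]
    (E : Finset α) (rk : Finset α → ℕ) (k : ℕ)
    (hrk : RankAxioms E rk) (hk : rk E = k)
    (𝔖 : Finset (Finset α)) (h𝔖 : ∀ S ∈ 𝔖, S ⊆ E) :
    ecZ 𝔖 (fun S => (rk S : ℤ)) (k : ℤ)
      = ecZ (𝔖.image fun S => E \ S)
          (fun S => (S.card : ℤ) - k + rk (E \ S)) ((E.card : ℤ) - k) ∧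
    ∀ S ∈ 𝔖,
      aZ 𝔖 (fun S => (rk S : ℤ)) S
        = bZ (𝔖.image fun S => E \ S)
            (fun S => (S.card : ℤ) - k + rk (E \ S)) ((E.card : ℤ) - k) (E \ S) :=
  ec_dual_invariance_general E rk k 𝔖 h𝔖
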